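/- arXiv:1711.10716 — 5 statements merged into one kernel-verified Lean document; each statement's English description precedes it below -/
import Mathlib

section
/- For every positive integer n, ∑_{k=1}^n (-1)^{k+1} · (1/k) · C(n,k) = ∑_{k=1}^n 1/k, i.e., the alternating binomial sum equals the harmonic number H_n. -/
/-! Writing `a n` for the left-hand side, Pascal's rule together with the absorption identity
`C(n, k-1) / k = C(n+1, k) / (n+1)` gives
`a (n+1) = a n + (1 / (n+1)) * ∑ k ∈ [1, n+1], (-1)^(k+1) C(n+1, k)`,
and the last sum is `1` because the full alternating row sum of binomial coefficients vanishes.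
So `a` grows by `1 / (n+1)` at each step, exactly like the harmonic numbers. -/

open Finset

theorem sum_Icc_one_neg_one_pow_succ_mul_choose {R : Type*} [CommRing R] {m : ℕ} (hm : m ≠ 0) :
    ∑ k ∈ Icc 1 m, (-1 : R) ^ (k + 1) * m.choose k = 1 := by
  have h := Int.alternating_sum_range_choose_of_ne hm
  rw [range_eq_Ico, sum_eq_sum_Ico_succ_bot m.add_one_pos, zero_add, Ico_add_one_right_eq_Icc] at h
  have hℤ : ∑ k ∈ Icc 1 m, (-1 : ℤ) ^ (k + 1) * m.choose k = 1 := by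
    simp only [pow_zero, Nat.choose_zero_right, Nat.cast_one, mul_one] at h
    simp only [pow_succ, mul_neg_one, neg_mul, sum_neg_distrib]
    linarith
  simpa using congrArg (Int.cast : ℤ → R) hℤ

section

variable {K : Type*} [Field K] [CharZero K]

theorem one_div_mul_choose_sub_one (n : ℕ) {k : ℕ} (hk : 0 < k) :
    1 / (k : K) * n.choose (k - 1) = 1 / (n + 1 : K) * (n + 1).choose k := by
  obtain ⟨j, rfl⟩ : ∃ j, k = j + 1 := ⟨k - 1, by omega⟩
  have h : ((n + 1 : ℕ) : K) * n.choose j = (n + 1).choose (j + 1) * ((j + 1 : ℕ) : K) := by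
    exact_mod_cast Nat.add_one_mul_choose_eq n j
  push_cast at h ⊢
  field_simp
  linear_combination h

theorem sum_Icc_neg_one_pow_mul_one_div_mul_choose (n : ℕ) :
    ∑ k ∈ Icc 1 n, (-1 : K) ^ (k + 1) * (1 / (k : K)) * n.choose k =
      ∑ k ∈ Icc 1 n, 1 / (k : K) := by
  induction n with
  | zero => simp
  | succ n ih =>
    calc ∑ k ∈ Icc 1 (n + 1), (-1 : K) ^ (k + 1) * (1 / (k : K)) * (n + 1).choose k
        = ∑ k ∈ Icc 1 (n + 1), (-1 : K) ^ (k + 1) * (1 / (k : K)) * n.choose k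
          + 1 / (n + 1 : K) * ∑ k ∈ Icc 1 (n + 1), (-1 : K) ^ (k + 1) * (n + 1).choose k := by
          rw [mul_sum, ← sum_add_distrib]
          refine sum_congr rfl fun k hk => ?_
          have hk : 0 < k := (mem_Icc.1 hk).1
          have pascal : ((n + 1).choose k : K) = n.choose (k - 1) + n.choose k := by
            exact_mod_cast Nat.choose_succ_left n k hk
          linear_combination (-1 : K) ^ (k + 1) * (1 / (k : K)) * pascal
            + (-1 : K) ^ (k + 1) * one_div_mul_choose_sub_one (K := K) n hk
      _ = ∑ k ∈ Icc 1 (n + 1), 1 / (k : K) := by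
          rw [sum_Icc_one_neg_one_pow_succ_mul_choose n.succ_ne_zero, sum_Icc_succ_top (by omega),
            sum_Icc_succ_top (by omega), Nat.choose_succ_self, ih]
          push_cast
          ring

end

theorem stmt3_general (n : ℕ) :
    ∑ k ∈ Finset.Icc 1 n, (-1:ℚ)^(k+1) * (1/(k:ℚ)) * (n.choose k) =
      ∑ k ∈ Finset.Icc 1 n, (1/(k:ℚ)) :=
  sum_Icc_neg_one_pow_mul_one_div_mul_choose n

theorem stmt3 (n : ℕ) (hn : 0 < n) :
    ∑ k ∈ Finset.Icc 1 n, (-1:ℚ)^(k+1) * (1/(k:ℚ)) * (n.choose k) =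
      ∑ k ∈ Finset.Icc 1 n, (1/(k:ℚ)) :=
  stmt3_general n
end

section
/- For all positive integers n and all nonnegative integers m, the recursive harmonic number satisfies H_n^{(m)} = ∑_{k=1}^n (-1)^{k+1} · (1/k^m) · C(n,k). -/
def recH : ℕ → ℕ → ℚ
  | 0, _ => 1
  | m+1, n => ∑ k ∈ Finset.Icc 1 n, (1/(k:ℚ)) * recH m k

/-! Induction on `m`. The case `m = 0` is the vanishing of the alternating sum of a row of
Pascal's triangle. For the step, substitute the formula for `H_j^{(m)}`, exchange the two sums,
and evaluate the inner sum with the hockey-stick type identity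
`∑_{j=1}^n C(j,k)/j = C(n,k)/k` (`k ≥ 1`), which supplies the extra factor `1/k`. -/

open Finset

theorem sum_Icc_one_alternating_choose {n : ℕ} (hn : n ≠ 0) :
    ∑ k ∈ Icc 1 n, (-1 : ℚ) ^ (k + 1) * n.choose k = 1 := by
  have hsum : ∑ k ∈ Icc 1 n, ((-1) ^ k * n.choose k : ℤ) = -1 := by
    have h := Int.alternating_sum_range_choose_of_ne hn
    rw [range_eq_Ico, sum_eq_sum_Ico_succ_bot n.succ_pos, zero_add, Nat.succ_eq_add_one,
      Ico_add_one_right_eq_Icc] at h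
    simp only [Int.reduceNeg, pow_zero, Nat.choose_zero_right, Nat.cast_one, mul_one] at h
    linarith
  simp only [pow_succ, mul_neg_one, neg_mul, sum_neg_distrib]
  exact_mod_cast neg_eq_iff_eq_neg.mpr hsum

theorem sum_Icc_one_choose_div {k : ℕ} (hk : k ≠ 0) (n : ℕ) :
    ∑ j ∈ Icc 1 n, (j.choose k : ℚ) / j = n.choose k / k := by
  obtain ⟨k, rfl⟩ := Nat.exists_eq_add_one_of_ne_zero hk
  induction n with
  | zero => simp
  | succ n ih =>
    have hpascal : ((n + 1).choose (k + 1) : ℚ) = n.choose k + n.choose (k + 1) := by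
      exact_mod_cast Nat.choose_succ_succ' n k
    have habsorb : ((n : ℚ) + 1) * n.choose k = (n + 1).choose (k + 1) * (k + 1) := by
      exact_mod_cast Nat.add_one_mul_choose_eq n k
    rw [sum_Icc_succ_top (by omega), ih]
    push_cast
    field_simp
    linear_combination -habsorb - (n + 1) * hpascal

theorem sum_Icc_one_mul_choose_eq_of_le {M : Type*} [Semiring M] (f : ℕ → M) {j n : ℕ}
    (hjn : j ≤ n) :
    ∑ k ∈ Icc 1 j, f k * j.choose k = ∑ k ∈ Icc 1 n, f k * j.choose k := by
  refine sum_subset (Icc_subset_Icc_right hjn) fun k _ hk => ?_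
  rw [Nat.choose_eq_zero_of_lt (by simp_all), Nat.cast_zero, mul_zero]

theorem stmt5 (n m : ℕ) (hn : 0 < n) :
    recH m n = ∑ k ∈ Finset.Icc 1 n, (-1:ℚ)^(k+1) * (1/(k:ℚ)^m) * (n.choose k) := by
  induction m generalizing n with
  | zero => simpa [recH] using (sum_Icc_one_alternating_choose hn.ne').symm
  | succ m ih =>
    calc recH (m + 1) n
        = ∑ j ∈ Icc 1 n, 1 / (j : ℚ) *
            ∑ k ∈ Icc 1 n, (-1) ^ (k + 1) * (1 / (k : ℚ) ^ m) * j.choose k := by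
          refine sum_congr rfl fun j hj => ?_
          obtain ⟨hj1, hjn⟩ := mem_Icc.mp hj
          rw [ih j hj1, sum_Icc_one_mul_choose_eq_of_le _ hjn]
      _ = ∑ k ∈ Icc 1 n, (-1) ^ (k + 1) * (1 / (k : ℚ) ^ m) *
            ∑ j ∈ Icc 1 n, (j.choose k : ℚ) / j := by
          simp_rw [mul_sum]
          rw [sum_comm]
          exact sum_congr rfl fun k _ => sum_congr rfl fun j _ => by ring
      _ = _ := by
          refine sum_congr rfl fun k hk => ?_
          rw [sum_Icc_one_choose_div (Nat.one_le_iff_ne_zero.mp (mem_Icc.mp hk).1), pow_succ]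
          ring
end

section
/- For all integers n ≥ 2 and m ≥ 1, ∑_{k=1}^n (-1)^{k+1}·(1/k^m)·C(n,k) = ∑_{k=1}^{n-1} (-1)^{k+1}·(1/k^m)·C(n-1,k) + (1/n)·∑_{k=1}^n (-1)^{k+1}·(1/k^{m-1})·C(n,k). -/
open Finset

/-- Pascal's rule together with `k * C(n, k) = n * C(n - 1, k - 1)`. It holds without side
conditions: at `k = 0`, and at `n = 0` where `k / n = 0`, both sides agree trivially. -/
theorem Nat.cast_choose_eq_cast_choose_pred_add {K : Type*} [Field K] [CharZero K] (n k : ℕ) :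
    (n.choose k : K) = ((n - 1).choose k : K) + k / n * n.choose k := by
  rcases n with _ | n
  · simp
  rcases k with _ | k
  · simp
  have hpred : (n.choose k : K) = (k + 1 : ℕ) / (n + 1 : ℕ) * (n + 1).choose (k + 1) := by
    field_simp
    norm_cast
    linarith [Nat.add_one_mul_choose_eq n k]
  rw [Nat.add_sub_cancel, ← hpred, Nat.choose_succ_succ', Nat.cast_add, add_comm]

theorem Finset.sum_Icc_one_pred_mul_choose_pred {R : Type*} [NonAssocSemiring R]
    (f : ℕ → R) (n : ℕ) :
    ∑ k ∈ Icc 1 (n - 1), f k * ((n - 1).choose k : R) =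
      ∑ k ∈ Icc 1 n, f k * ((n - 1).choose k : R) := by
  refine sum_subset (Icc_subset_Icc_right (Nat.sub_le n 1)) fun k hk hk' => ?_
  rw [Nat.choose_eq_zero_of_lt, Nat.cast_zero, mul_zero]
  simp only [mem_Icc] at hk hk'
  omega

theorem stmt9_general (n m : ℕ) (hm : 1 ≤ m) :
    ∑ k ∈ Finset.Icc 1 n, (-1:ℚ)^(k+1) * (1/(k:ℚ)^m) * (n.choose k) =
      (∑ k ∈ Finset.Icc 1 (n-1), (-1:ℚ)^(k+1) * (1/(k:ℚ)^m) * ((n-1).choose k)) +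
      (1/(n:ℚ)) * ∑ k ∈ Finset.Icc 1 n, (-1:ℚ)^(k+1) * (1/(k:ℚ)^(m-1)) * (n.choose k) := by
  obtain ⟨m, rfl⟩ := Nat.exists_eq_add_of_le' hm
  rw [sum_Icc_one_pred_mul_choose_pred, mul_sum, ← sum_add_distrib]
  refine sum_congr rfl fun k hk => ?_
  have hk0 : (k : ℚ) ≠ 0 := Nat.cast_ne_zero.2 (Nat.one_le_iff_ne_zero.1 (mem_Icc.1 hk).1)
  have hchoose := Nat.cast_choose_eq_cast_choose_pred_add (K := ℚ) n k
  rw [Nat.add_sub_cancel, pow_succ]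
  field_simp
  linear_combination -(k : ℚ) ^ m * hchoose

theorem stmt9 (n m : ℕ) (hn : 2 ≤ n) (hm : 1 ≤ m) :
    ∑ k ∈ Finset.Icc 1 n, (-1:ℚ)^(k+1) * (1/(k:ℚ)^m) * (n.choose k) =
      (∑ k ∈ Finset.Icc 1 (n-1), (-1:ℚ)^(k+1) * (1/(k:ℚ)^m) * ((n-1).choose k)) +
      (1/(n:ℚ)) * ∑ k ∈ Finset.Icc 1 n, (-1:ℚ)^(k+1) * (1/(k:ℚ)^(m-1)) * (n.choose k) :=
  stmt9_general n m hm
end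

section
/- For fixed n ≥ 1, the limit of H_n^{(m)} as m → ∞ equals n; equivalently, ∑_{k=1}^n (-1)^{k+1}(1/k^m)C(n,k) → n as m → ∞. -/
/-!
Unfolding the recursion gives the closed form
`H_n^{(m)} = ∑_{k=1}^n (-1)^(k+1) C(n,k) / k^m` for `n ≥ 1`: after interchanging the two sums,
the step `m → m+1` is the identity `∑_{k=1}^n C(k,j) / k = C(n,j) / j`. As `m → ∞` the terms with
`k ≥ 2` vanish and the term `k = 1` is `n`.
-/

open Finset Filter Topology

theorem sum_Icc_neg_one_pow_succ_mul_choose {R : Type*} [CommRing R] {n : ℕ} (hn : n ≠ 0) :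
    ∑ k ∈ Icc 1 n, (-1 : R) ^ (k + 1) * n.choose k = 1 := by
  have h := congrArg (Int.cast : ℤ → R) (Int.alternating_sum_range_choose_of_ne hn)
  rw [Nat.range_succ_eq_Icc_zero, Icc_eq_cons_Ioc n.zero_le, sum_cons,
    ← Icc_add_one_left_eq_Ioc] at h
  push_cast [Nat.choose_zero_right] at h
  simp only [pow_succ, mul_neg_one, neg_mul, sum_neg_distrib]
  linear_combination -h

theorem sum_Icc_choose_div_self {K : Type*} [Field K] [CharZero K] (n i : ℕ) :
    ∑ k ∈ Icc 1 n, (k.choose (i + 1) : K) / k = n.choose (i + 1) / (i + 1) := by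
  induction n with
  | zero => simp
  | succ n ih =>
    rw [sum_Icc_succ_top (by omega), ih]
    have absorb : ((n + 1) * n.choose i : K) = (n + 1).choose (i + 1) * (i + 1) := by
      exact_mod_cast Nat.add_one_mul_choose_eq n i
    rw [Nat.choose_succ_succ'] at absorb ⊢
    field_simp
    push_cast at absorb ⊢
    linear_combination -absorb

theorem recH_eq_sum_choose (m : ℕ) {n : ℕ} (hn : n ≠ 0) :
    recH m n = ∑ k ∈ Icc 1 n, (-1) ^ (k + 1) * (n.choose k : ℚ) / k ^ m := by
  induction m generalizing n with
  | zero => simpa [recH] using (sum_Icc_neg_one_pow_succ_mul_choose hn).symm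
  | succ m ih =>
    calc recH (m + 1) n
        = ∑ k ∈ Icc 1 n, ∑ j ∈ Icc 1 n, (-1) ^ (j + 1) / (j : ℚ) ^ m * ((k.choose j : ℚ) / k) := by
          refine sum_congr rfl fun k hk => ?_
          obtain ⟨hk1, hkn⟩ := mem_Icc.mp hk
          rw [ih (by omega), mul_sum]
          refine sum_subset (Icc_subset_Icc_right hkn) (fun j hj hjk => ?_) |>.trans
            (sum_congr rfl fun j _ => by ring)
          simp only [mem_Icc, not_and, not_le] at hj hjk
          simp [Nat.choose_eq_zero_of_lt (hjk hj.1)]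
      _ = ∑ j ∈ Icc 1 n, (-1) ^ (j + 1) / (j : ℚ) ^ m * ∑ k ∈ Icc 1 n, (k.choose j : ℚ) / k := by
          rw [sum_comm]; simp only [mul_sum]
      _ = _ := by
          refine sum_congr rfl fun j hj => ?_
          obtain ⟨i, rfl⟩ := Nat.exists_eq_add_one_of_ne_zero
            (Nat.one_le_iff_ne_zero.mp (mem_Icc.mp hj).1)
          rw [sum_Icc_choose_div_self]
          push_cast
          field_simp
          ring

theorem tendsto_sum_Icc_div_pow_atTop (c : ℕ → ℝ) {n : ℕ} (hn : n ≠ 0) :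
    Tendsto (fun m : ℕ => ∑ k ∈ Icc 1 n, c k / (k : ℝ) ^ m) atTop (𝓝 (c 1)) := by
  simp_rw [Icc_eq_cons_Ioc (Nat.one_le_iff_ne_zero.mpr hn), sum_cons, Nat.cast_one, one_pow,
    div_one]
  have hvanish : ∀ k ∈ Ioc 1 n, Tendsto (fun m : ℕ => c k / (k : ℝ) ^ m) atTop (𝓝 0) :=
    fun k hk => tendsto_const_nhds.div_atTop <| tendsto_pow_atTop_atTop_of_one_lt <| by
      exact_mod_cast (mem_Ioc.mp hk).1
  simpa using tendsto_const_nhds.add (tendsto_finsetSum _ hvanish)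

theorem stmt14 (n : ℕ) (hn : 1 ≤ n) :
    Filter.Tendsto (fun m => ((recH m n : ℚ) : ℝ)) Filter.atTop (nhds (n : ℝ)) := by
  have hn0 : n ≠ 0 := by omega
  have hclosed (m : ℕ) : ((recH m n : ℚ) : ℝ) =
      ∑ k ∈ Icc 1 n, (-1) ^ (k + 1) * (n.choose k : ℝ) / (k : ℝ) ^ m := by
    exact_mod_cast recH_eq_sum_choose m hn0
  simp_rw [hclosed]
  simpa using tendsto_sum_Icc_div_pow_atTop (fun k => (-1) ^ (k + 1) * (n.choose k : ℝ)) hn0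
end

section
/- For all positive integers n, H_n^{(2)} = ∑_{k=1}^n (-1)^{k+1} · (1/k^2) · C(n,k). -/
/-!
Write `S_m(n) = ∑_{k=1}^n (-1)^(k+1) C(n,k) / k^m`. Since `C(n+1,k) = C(n,k) + (k/(n+1)) C(n+1,k)`,
one factor `k` cancels and `S_{m+1}(n+1) = S_{m+1}(n) + S_m(n+1)/(n+1)`; telescoping gives
`S_{m+1}(n) = ∑_{k=1}^n S_m(k)/k`. Starting from `S_0(n) = 1` for `n ≥ 1` (the alternating binomial sum), this
yields `S_1(n) = H_n` and then `S_2(n) = ∑_{k=1}^n H_k/k`.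
-/

open Finset

def altBinomSum (m n : ℕ) : ℚ :=
  ∑ k ∈ Icc 1 n, (-1 : ℚ) ^ (k + 1) * (1 / (k : ℚ) ^ m) * n.choose k

lemma cast_choose_succ (n k : ℕ) :
    ((n + 1).choose k : ℚ) = n.choose k + k / (n + 1) * (n + 1).choose k := by
  have hmul : (n.choose k : ℚ) * (n + 1) = (n + 1).choose k * (n + 1 - k) := by
    rcases le_or_gt k (n + 1) with hk | hk
    · rw [← Nat.cast_succ, ← Nat.cast_sub hk]
      exact_mod_cast Nat.choose_mul_succ_eq n k
    · simp [Nat.choose_eq_zero_of_lt hk, Nat.choose_eq_zero_of_lt (Nat.lt_of_succ_lt hk)]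
  have hn : (n + 1 : ℚ) ≠ 0 := by positivity
  rw [div_mul_eq_mul_div, eq_comm, add_div' _ _ _ hn, div_eq_iff hn]
  linear_combination hmul

lemma altBinomSum_zero_succ (n : ℕ) : altBinomSum 0 (n + 1) = 1 := by
  have h : ∑ k ∈ range (n + 2), (-1 : ℚ) ^ k * (n + 1).choose k = 0 := by
    exact_mod_cast Int.alternating_sum_range_choose_of_ne n.succ_ne_zero
  rw [sum_range_succ'] at h
  rw [altBinomSum, ← Ico_add_one_right_eq_Icc, sum_Ico_eq_sum_range, Nat.add_sub_cancel]
  simp only [pow_succ, pow_zero, add_comm 1] at *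
  simp only [mul_neg, mul_one, neg_mul, sum_neg_distrib, Nat.choose_zero_right, Nat.cast_one,
    neg_neg, ne_eq, one_ne_zero, not_false_eq_true, div_self] at h ⊢
  linear_combination -h

lemma altBinomSum_succ_succ (m n : ℕ) :
    altBinomSum (m + 1) (n + 1) = altBinomSum (m + 1) n + altBinomSum m (n + 1) / (n + 1) := by
  have hterm : ∀ k ∈ Icc 1 (n + 1),
      (-1 : ℚ) ^ (k + 1) * (1 / (k : ℚ) ^ (m + 1)) * (n + 1).choose k =
        (-1 : ℚ) ^ (k + 1) * (1 / (k : ℚ) ^ (m + 1)) * n.choose k +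
          (-1 : ℚ) ^ (k + 1) * (1 / (k : ℚ) ^ m) * (n + 1).choose k / (n + 1) := by
    intro k hk
    have hk0 : (k : ℚ) ≠ 0 := by exact_mod_cast (Nat.one_le_iff_ne_zero.mp (mem_Icc.mp hk).1)
    conv_lhs => rw [cast_choose_succ]
    field_simp
    ring
  rw [altBinomSum, sum_congr rfl hterm, sum_add_distrib, sum_Icc_succ_top (by omega),
    Nat.choose_succ_self, altBinomSum, altBinomSum, sum_div]
  simp

lemma altBinomSum_succ_eq_sum (m n : ℕ) :
    altBinomSum (m + 1) n = ∑ k ∈ Icc 1 n, altBinomSum m k / k := by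
  induction n with
  | zero => simp [altBinomSum]
  | succ n ih =>
    rw [altBinomSum_succ_succ, ih, sum_Icc_succ_top (by omega), Nat.cast_succ]

lemma altBinomSum_one (n : ℕ) : altBinomSum 1 n = harmonic n := by
  rw [altBinomSum_succ_eq_sum, harmonic_eq_sum_Icc]
  refine sum_congr rfl fun k hk => ?_
  obtain ⟨j, rfl⟩ := Nat.exists_eq_add_of_le' (mem_Icc.mp hk).1
  rw [altBinomSum_zero_succ, one_div]

theorem stmt16_general (n : ℕ) :
    ∑ k ∈ Finset.Icc 1 n, (1/(k:ℚ)) * ∑ j ∈ Finset.Icc 1 k, (1/(j:ℚ)) =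
      ∑ k ∈ Finset.Icc 1 n, (-1:ℚ)^(k+1) * (1/(k:ℚ)^2) * (n.choose k) := by
  change _ = altBinomSum 2 n
  rw [altBinomSum_succ_eq_sum]
  refine sum_congr rfl fun k _ => ?_
  rw [altBinomSum_one, harmonic_eq_sum_Icc]
  simp only [div_eq_inv_mul, mul_one]

theorem stmt16 (n : ℕ) (hn : 0 < n) :
    ∑ k ∈ Finset.Icc 1 n, (1/(k:ℚ)) * ∑ j ∈ Finset.Icc 1 k, (1/(j:ℚ)) =
      ∑ k ∈ Finset.Icc 1 n, (-1:ℚ)^(k+1) * (1/(k:ℚ)^2) * (n.choose k) :=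
  stmt16_general n
end
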